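/- Converse of the variational lemma in one variable: if a differential polynomial L(x, u, u', …, u^{(k)}) has identically vanishing Euler-Lagrange derivative E(L) = 0, then L is a total derivative: L = d f/dx for some differential polynomial f. -/

import Mathlib

open MvPolynomial

/-- The polynomial jet algebra in one independent variable: polynomials in the
variables `x` (encoded as `none`) and `u⁽ⁱ⁾`, `i = 0, 1, 2, …` (encoded as
`some i`), with real coefficients. -/
abbrev JetAlgebra := MvPolynomial (Option ℕ) ℝ

/-- The total derivative `d/dx`:
`df/dx = ∂f/∂x + u' ∂f/∂u + u'' ∂f/∂u' + ⋯`.  The sum over the jet variables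
is finite: only the variables actually occurring in `f` contribute, since
`∂f/∂u⁽ⁱ⁾ = 0` when `u⁽ⁱ⁾` does not occur in `f`. -/
noncomputable def totalDeriv (f : JetAlgebra) : JetAlgebra :=
  pderiv (none : Option ℕ) f +
    ∑ v ∈ f.vars, match v with
      | none => 0
      | some i => X (some (i + 1)) * pderiv (some i) f

/-- The Euler-Lagrange operator
`E(L) = ∑_{i ≥ 0} (-d/dx)^i (∂L/∂u⁽ⁱ⁾)`; again only the finitely many jet
variables occurring in `L` contribute to the sum. -/
noncomputable def eulerLagrange (L : JetAlgebra) : JetAlgebra :=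
  ∑ v ∈ L.vars, match v with
    | none => 0
    | some i => (-1 : JetAlgebra) ^ i * totalDeriv^[i] (pderiv (some i) L)


-- term abbreviations
noncomputable def tdTerm (f : JetAlgebra) : Option ℕ → JetAlgebra
  | none => 0
  | some i => X (some (i + 1)) * pderiv (some i) f

noncomputable def elTerm (L : JetAlgebra) : Option ℕ → JetAlgebra
  | none => 0
  | some i => (-1 : JetAlgebra) ^ i * totalDeriv^[i] (pderiv (some i) L)

noncomputable def nTerm (f : JetAlgebra) : Option ℕ → JetAlgebra
  | none => 0
  | some i => X (some i) * pderiv (some i) f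

lemma totalDeriv_def' (f : JetAlgebra) :
    totalDeriv f = pderiv (none : Option ℕ) f + ∑ v ∈ f.vars, tdTerm f v := rfl

lemma eulerLagrange_def' (L : JetAlgebra) :
    eulerLagrange L = ∑ v ∈ L.vars, elTerm L v := rfl

lemma tdTerm_eq_zero {f : JetAlgebra} {v : Option ℕ} (h : v ∉ f.vars) : tdTerm f v = 0 := by
  cases v with
  | none => rfl
  | some i => show X (some (i+1)) * pderiv (some i) f = 0; rw [pderiv_eq_zero_of_notMem_vars h, mul_zero]

lemma totalDeriv_eq_sum (f : JetAlgebra) (S : Finset (Option ℕ)) (h : f.vars ⊆ S) :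
    totalDeriv f = pderiv (none : Option ℕ) f + ∑ v ∈ S, tdTerm f v := by
  rw [totalDeriv_def']
  congr 1
  exact Finset.sum_subset h (fun v _ hv => tdTerm_eq_zero hv)

lemma totalDeriv_zero : totalDeriv (0 : JetAlgebra) = 0 := by
  simp [totalDeriv]

lemma totalDeriv_add (f g : JetAlgebra) :
    totalDeriv (f + g) = totalDeriv f + totalDeriv g := by
  classical
  rw [totalDeriv_eq_sum f (f.vars ∪ g.vars) Finset.subset_union_left,
      totalDeriv_eq_sum g (f.vars ∪ g.vars) Finset.subset_union_right,
      totalDeriv_eq_sum (f + g) (f.vars ∪ g.vars) (vars_add_subset f g),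
      map_add]
  have : ∀ v ∈ f.vars ∪ g.vars, tdTerm (f + g) v = tdTerm f v + tdTerm g v := by
    rintro (_ | i) _
    · simp [tdTerm]
    · show X (some (i+1)) * pderiv (some i) (f + g) = _ + _
      rw [map_add, mul_add]; rfl
  rw [Finset.sum_congr rfl this, Finset.sum_add_distrib]
  ring

lemma vars_smul_subset (c : ℝ) (f : JetAlgebra) : (c • f).vars ⊆ f.vars := by
  intro v hv
  rw [mem_vars] at hv ⊢
  obtain ⟨d, hd, hvd⟩ := hv
  exact ⟨d, MvPolynomial.support_smul hd, hvd⟩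

lemma totalDeriv_smul (c : ℝ) (f : JetAlgebra) :
    totalDeriv (c • f) = c • totalDeriv f := by
  rw [totalDeriv_eq_sum (c • f) f.vars (vars_smul_subset c f), totalDeriv_def', Derivation.map_smul,
      smul_add]
  congr 1
  rw [Finset.smul_sum]
  refine Finset.sum_congr rfl ?_
  rintro (_ | i) _
  · simp [tdTerm]
  · show X (some (i+1)) * pderiv (some i) (c • f) = c • (X (some (i+1)) * pderiv (some i) f)
    rw [Derivation.map_smul, mul_smul_comm]

lemma totalDeriv_finset_sum {α : Type*} (s : Finset α) (F : α → JetAlgebra) :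
    totalDeriv (∑ a ∈ s, F a) = ∑ a ∈ s, totalDeriv (F a) := by
  classical
  induction s using Finset.induction_on with
  | empty => simpa using totalDeriv_zero
  | insert _ _ h ih => rw [Finset.sum_insert h, Finset.sum_insert h, totalDeriv_add, ih]

lemma totalDeriv_mul (f g : JetAlgebra) :
    totalDeriv (f * g) = f * totalDeriv g + g * totalDeriv f := by
  classical
  rw [totalDeriv_eq_sum (f * g) (f.vars ∪ g.vars) (vars_mul f g),
      totalDeriv_eq_sum f (f.vars ∪ g.vars) Finset.subset_union_left,
      totalDeriv_eq_sum g (f.vars ∪ g.vars) Finset.subset_union_right]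
  have : ∀ v ∈ f.vars ∪ g.vars, tdTerm (f * g) v = f * tdTerm g v + g * tdTerm f v := by
    rintro (_ | i) _
    · simp [tdTerm]
    · show X (some (i+1)) * pderiv (some i) (f * g) = _ + _
      rw [pderiv_mul]
      show _ = f * (X (some (i+1)) * pderiv (some i) g) + g * (X (some (i+1)) * pderiv (some i) f)
      ring
  rw [Finset.sum_congr rfl this, Finset.sum_add_distrib, pderiv_mul]
  conv_rhs => rw [mul_add, mul_add, Finset.mul_sum, Finset.mul_sum]
  ring

lemma totalDeriv_X_some (i : ℕ) : totalDeriv (X (some i) : JetAlgebra) = X (some (i + 1)) := by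
  rw [totalDeriv_def', vars_X]
  simp only [Finset.sum_singleton]
  show pderiv none (X (some i)) + X (some (i+1)) * pderiv (some i) (X (some i)) = _
  rw [pderiv_X_of_ne (by simp), pderiv_X_self]
  ring

noncomputable def jw : Option ℕ → ℕ := fun v => match v with | none => 0 | some _ => 1

lemma weight_apply' (m : Option ℕ →₀ ℕ) :
    Finsupp.weight jw m = ∑ v ∈ m.support, m v * jw v := by
  rw [Finsupp.weight_apply]
  exact Finset.sum_congr rfl fun v _ => by simp [nsmul_eq_mul]

lemma weight_single (v : Option ℕ) (k : ℕ) :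
    Finsupp.weight jw (Finsupp.single v k) = k * jw v := by
  rw [Finsupp.weight_apply, Finsupp.sum_single_index (by simp)]
  simp [nsmul_eq_mul]

lemma weight_sub_single {m : Option ℕ →₀ ℕ} {v : Option ℕ} (h : m v ≠ 0) :
    Finsupp.weight jw (m - Finsupp.single v 1) + jw v = Finsupp.weight jw m := by
  have hle : Finsupp.single v 1 ≤ m := by
    rw [Finsupp.single_le_iff]; omega
  conv_rhs => rw [← tsub_add_cancel_of_le hle]
  rw [map_add, weight_single, one_mul]

lemma X_eq_monomial (v : Option ℕ) :
    (X v : JetAlgebra) = monomial (Finsupp.single v 1) 1 := rfl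

lemma X_mul_pderiv_monomial (v : Option ℕ) (m : Option ℕ →₀ ℕ) (c : ℝ) :
    X v * pderiv v (monomial m c) = (m v) • (monomial m c : JetAlgebra) := by
  rw [pderiv_monomial]
  by_cases h : m v = 0
  · simp [h]
  · have hle : Finsupp.single v 1 ≤ m := by rw [Finsupp.single_le_iff]; omega
    rw [X_eq_monomial, monomial_mul, one_mul, add_tsub_cancel_of_le hle]
    rw [MvPolynomial.smul_monomial]
    congr 1
    rw [nsmul_eq_mul]
    ring

lemma nTerm_monomial (m : Option ℕ →₀ ℕ) (c : ℝ) (v : Option ℕ) :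
    nTerm (monomial m c) v = (m v * jw v) • (monomial m c : JetAlgebra) := by
  cases v with
  | none =>
      show (0 : JetAlgebra) = (m none * jw none) • (monomial m c : JetAlgebra)
      simp [jw]
  | some i =>
      show X (some i) * pderiv (some i) (monomial m c) = _
      rw [X_mul_pderiv_monomial]
      simp [jw]

lemma sum_nTerm_monomial (S : Finset (Option ℕ)) (m : Option ℕ →₀ ℕ) (c : ℝ)
    (hS : m.support ⊆ S) :
    ∑ v ∈ S, nTerm (monomial m c) v = (Finsupp.weight jw m) • (monomial m c : JetAlgebra) := by
  rw [Finset.sum_congr rfl (fun v _ => nTerm_monomial m c v), ← Finset.sum_smul]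
  congr 1
  rw [weight_apply']
  exact (Finset.sum_subset hS (fun v _ hv => by
    rw [Finsupp.notMem_support_iff.mp hv, zero_mul])).symm

lemma nTerm_finset_sum {α : Type*} (s : Finset α) (F : α → JetAlgebra) (v : Option ℕ) :
    nTerm (∑ a ∈ s, F a) v = ∑ a ∈ s, nTerm (F a) v := by
  cases v with
  | none => simp [nTerm]
  | some i =>
      show X (some i) * pderiv (some i) (∑ a ∈ s, F a) = _
      rw [map_sum, Finset.mul_sum]
      rfl

lemma mono_support_subset_vars {f : JetAlgebra} {m : Option ℕ →₀ ℕ} (hm : m ∈ f.support) :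
    m.support ⊆ f.vars := fun v hv => (mem_vars v).mpr ⟨m, hm, hv⟩

lemma sum_nTerm_of_isWH {f : JetAlgebra} {n : ℕ} (hf : f.IsWeightedHomogeneous jw n)
    (S : Finset (Option ℕ)) (hS : f.vars ⊆ S) :
    ∑ v ∈ S, nTerm f v = n • f := by
  calc ∑ v ∈ S, nTerm f v
      = ∑ v ∈ S, ∑ m ∈ f.support, nTerm (monomial m (coeff m f)) v := by
        refine Finset.sum_congr rfl fun v _ => ?_
        rw [← nTerm_finset_sum]
        conv_lhs => rw [f.as_sum]
    _ = ∑ m ∈ f.support, ∑ v ∈ S, nTerm (monomial m (coeff m f)) v := Finset.sum_comm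
    _ = ∑ m ∈ f.support, (Finsupp.weight jw m) • (monomial m (coeff m f) : JetAlgebra) := by
        refine Finset.sum_congr rfl fun m hm => ?_
        exact sum_nTerm_monomial S m _ ((mono_support_subset_vars hm).trans hS)
    _ = ∑ m ∈ f.support, n • (monomial m (coeff m f) : JetAlgebra) := by
        refine Finset.sum_congr rfl fun m hm => ?_
        rw [hf (mem_support_iff.mp hm)]
    _ = n • f := by rw [← Finset.smul_sum, ← f.as_sum]

lemma isWH_totalDeriv {f : JetAlgebra} {n : ℕ} (hf : f.IsWeightedHomogeneous jw n) :
    (totalDeriv f).IsWeightedHomogeneous jw n := by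
  rw [← mem_weightedHomogeneousSubmodule]
  rw [totalDeriv_def']
  refine Submodule.add_mem _ ?_ (Submodule.sum_mem _ ?_)
  · have hrepr : pderiv (none : Option ℕ) f
        = ∑ m ∈ f.support, (monomial (m - Finsupp.single none 1) (coeff m f * (m none : ℝ))
            : JetAlgebra) := by
      conv_lhs => rw [f.as_sum]
      rw [map_sum]
      exact Finset.sum_congr rfl fun m _ => pderiv_monomial
    rw [hrepr]
    refine Submodule.sum_mem _ fun m hm => ?_
    by_cases h : m none = 0
    · rw [h]
      simp only [Nat.cast_zero, mul_zero, map_zero]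
      exact Submodule.zero_mem _
    · refine (mem_weightedHomogeneousSubmodule ℝ jw n _).mpr
        (isWeightedHomogeneous_monomial _ _ _ ?_)
      have h1 := weight_sub_single (v := none) h
      have hm' : Finsupp.weight jw m = n := hf (mem_support_iff.mp hm)
      simp only [jw] at h1
      omega
  · rintro (_ | i) _
    · exact Submodule.zero_mem _
    · show X (some (i+1)) * pderiv (some i) f ∈ _
      have hrepr : pderiv (some i) f
          = ∑ m ∈ f.support, (monomial (m - Finsupp.single (some i) 1)
              (coeff m f * (m (some i) : ℝ)) : JetAlgebra) := by
        conv_lhs => rw [f.as_sum]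
        rw [map_sum]
        exact Finset.sum_congr rfl fun m _ => pderiv_monomial
      rw [hrepr, Finset.mul_sum]
      refine Submodule.sum_mem _ fun m hm => ?_
      by_cases h : m (some i) = 0
      · rw [h]
        simp only [Nat.cast_zero, mul_zero, map_zero, mul_zero]
        exact Submodule.zero_mem _
      · rw [X_eq_monomial, monomial_mul, one_mul]
        refine (mem_weightedHomogeneousSubmodule ℝ jw n _).mpr
          (isWeightedHomogeneous_monomial _ _ _ ?_)
        have h1 := weight_sub_single (v := some i) h
        have hm' : Finsupp.weight jw m = n := hf (mem_support_iff.mp hm)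
        rw [map_add, weight_single]
        simp only [jw] at h1 ⊢
        omega

lemma vars_wcomp_subset (n : ℕ) (φ : JetAlgebra) :
    (weightedHomogeneousComponent jw n φ).vars ⊆ φ.vars := by
  classical
  intro v hv
  rw [mem_vars] at hv ⊢
  obtain ⟨d, hd, hvd⟩ := hv
  refine ⟨d, ?_, hvd⟩
  rw [mem_support_iff] at hd ⊢
  intro h0
  exact hd (by simp [coeff_weightedHomogeneousComponent, h0])

lemma sum_range_wcomp (φ : JetAlgebra) (D : ℕ) (hD : weightedTotalDegree jw φ ≤ D) :
    ∑ n ∈ Finset.range (D+1), weightedHomogeneousComponent jw n φ = φ := by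
  classical
  apply MvPolynomial.ext
  intro m
  rw [MvPolynomial.coeff_sum]
  simp only [coeff_weightedHomogeneousComponent]
  rw [Finset.sum_ite_eq (Finset.range (D+1)) (Finsupp.weight jw m) (fun _ => coeff m φ)]
  by_cases h : Finsupp.weight jw m ≤ D
  · rw [if_pos (Finset.mem_range.mpr (Nat.lt_succ_of_le h))]
  · rw [if_neg (by simpa [Finset.mem_range, Nat.lt_succ_iff] using h)]
    by_contra hc
    exact h ((le_weightedTotalDegree jw (mem_support_iff.mpr fun hz => hc hz.symm)).trans hD)

lemma totalDeriv_sub (f g : JetAlgebra) : totalDeriv (f - g) = totalDeriv f - totalDeriv g := by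
  have : f - g = f + (-1 : ℝ) • g := by module
  rw [this, totalDeriv_add, totalDeriv_smul]
  module

lemma ibp (i : ℕ) (A : JetAlgebra) :
    ∃ g, X (some i) * A = totalDeriv g + (-1 : JetAlgebra)^i * (X (some 0) * totalDeriv^[i] A) := by
  induction i generalizing A with
  | zero => exact ⟨0, by simp [totalDeriv_zero]⟩
  | succ i ih =>
    obtain ⟨g', hg'⟩ := ih (totalDeriv A)
    rw [← Function.iterate_succ_apply] at hg'
    refine ⟨X (some i) * A - g', ?_⟩
    rw [totalDeriv_sub, totalDeriv_mul, totalDeriv_X_some]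
    linear_combination (-1 : JetAlgebra) * hg'

lemma sum_nTerm_eq (f : JetAlgebra) (S : Finset (Option ℕ)) (hS : f.vars ⊆ S) (D : ℕ)
    (hD : weightedTotalDegree jw f ≤ D) :
    ∑ v ∈ S, nTerm f v
      = ∑ n ∈ Finset.range (D+1), n • weightedHomogeneousComponent jw n f := by
  calc ∑ v ∈ S, nTerm f v
      = ∑ v ∈ S, ∑ n ∈ Finset.range (D+1), nTerm (weightedHomogeneousComponent jw n f) v := by
        refine Finset.sum_congr rfl fun v _ => ?_
        rw [← nTerm_finset_sum]
        rw [sum_range_wcomp f D hD]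
    _ = ∑ n ∈ Finset.range (D+1), ∑ v ∈ S, nTerm (weightedHomogeneousComponent jw n f) v :=
        Finset.sum_comm
    _ = _ := by
        refine Finset.sum_congr rfl fun n _ => ?_
        exact sum_nTerm_of_isWH (weightedHomogeneousComponent_isWeightedHomogeneous n f) S
          ((vars_wcomp_subset n f).trans hS)

lemma vars_monomial_subset' (d : Option ℕ →₀ ℕ) (c : ℝ) :
    (monomial d c : JetAlgebra).vars ⊆ d.support := by
  by_cases h : c = 0
  · simp [h]
  · rw [vars_monomial h]

lemma exists_antideriv (φ : JetAlgebra)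
    (hφ : ∀ m ∈ φ.support, (m.support : Finset (Option ℕ)) ⊆ {none}) :
    ∃ g, totalDeriv g = φ := by
  classical
  refine ⟨∑ m ∈ φ.support, monomial (m + Finsupp.single none 1)
      (((m none : ℝ) + 1)⁻¹ * coeff m φ), ?_⟩
  set g := ∑ m ∈ φ.support, monomial (m + Finsupp.single none 1)
      (((m none : ℝ) + 1)⁻¹ * coeff m φ) with hg
  have hvars : g.vars ⊆ {none} := by
    refine (vars_sum_subset _ _).trans ?_
    rw [Finset.biUnion_subset]
    intro m hm
    refine (vars_monomial_subset' _ _).trans (Finsupp.support_add.trans ?_)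
    exact Finset.union_subset (hφ m hm) Finsupp.support_single_subset
  rw [totalDeriv_def']
  have h2 : ∑ v ∈ g.vars, tdTerm g v = 0 := by
    refine Finset.sum_eq_zero fun v hv => ?_
    have := hvars hv
    rw [Finset.mem_singleton] at this
    subst this
    rfl
  rw [h2, add_zero, hg, map_sum]
  conv_rhs => rw [φ.as_sum]
  refine Finset.sum_congr rfl fun m hm => ?_
  rw [pderiv_monomial, add_tsub_cancel_right, Finsupp.add_apply, Finsupp.single_eq_same]
  congr 1
  have hne : (m none : ℝ) + 1 ≠ 0 := by positivity
  push_cast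
  field_simp

/-- converse of the variational lemma in one variable: if a
differential polynomial `L(x, u, u', …, u⁽ᵏ⁾)` has identically vanishing
Euler-Lagrange derivative `E(L) = 0`, then `L` is a total derivative:
`L = df/dx` for some differential polynomial `f`. -/
theorem total_derivative_of_eulerLagrange_eq_zero (L : JetAlgebra)
    (hL : eulerLagrange L = 0) :
    ∃ f : JetAlgebra, totalDeriv f = L := by
  classical
  -- Step 1: integration by parts: N(L) = totalDeriv G
  have hv : ∀ v : Option ℕ, ∃ g, nTerm L v = totalDeriv g + X (some 0) * elTerm L v := by
    rintro (_ | i)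
    · exact ⟨0, by simp [nTerm, elTerm, totalDeriv_zero]⟩
    · obtain ⟨g, hg⟩ := ibp i (pderiv (some i) L)
      refine ⟨g, ?_⟩
      show X (some i) * pderiv (some i) L
        = totalDeriv g + X (some 0) * ((-1 : JetAlgebra)^i * totalDeriv^[i] (pderiv (some i) L))
      rw [hg]; ring
  choose gg hgg using hv
  set G := ∑ v ∈ L.vars, gg v with hGdef
  have key : (∑ v ∈ L.vars, nTerm L v) = totalDeriv G := by
    rw [hGdef, totalDeriv_finset_sum]
    calc ∑ v ∈ L.vars, nTerm L v
        = ∑ v ∈ L.vars, (totalDeriv (gg v) + X (some 0) * elTerm L v) :=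
          Finset.sum_congr rfl fun v _ => hgg v
      _ = ∑ v ∈ L.vars, totalDeriv (gg v) + X (some 0) * ∑ v ∈ L.vars, elTerm L v := by
          rw [Finset.sum_add_distrib, Finset.mul_sum]
      _ = ∑ v ∈ L.vars, totalDeriv (gg v) := by
          rw [← eulerLagrange_def', hL, mul_zero, add_zero]
  set D := max (weightedTotalDegree jw L) (weightedTotalDegree jw G) with hDdef
  set W : ℕ → JetAlgebra →ₗ[ℝ] JetAlgebra := fun n => weightedHomogeneousComponent jw n with hWdef
  -- Step 2: totalDeriv G = ∑ n • W n L
  have hNL : totalDeriv G = ∑ n ∈ Finset.range (D+1), n • (W n L) := by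
    rw [← key]
    exact sum_nTerm_eq L L.vars (Finset.Subset.refl _) D (le_max_left _ _)
  have hGdecomp : totalDeriv G = ∑ m ∈ Finset.range (D+1), totalDeriv (W m G) := by
    rw [← totalDeriv_finset_sum]
    congr 1
    exact (sum_range_wcomp G D (le_max_right _ _)).symm
  -- Step 3: extract components
  have hextract : ∀ n ∈ Finset.range (D+1), n • W n L = totalDeriv (W n G) := by
    intro n hn
    have e1 : W n (totalDeriv G) = n • W n L := by
      rw [hNL, map_sum]
      rw [Finset.sum_eq_single_of_mem n hn ?ne]
      case ne =>
        intro m _ hmn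
        rw [map_nsmul]
        rw [(weightedHomogeneousComponent_isWeightedHomogeneous m L).weightedHomogeneousComponent_ne
          n hmn.symm]
        simp
      rw [map_nsmul,
        (weightedHomogeneousComponent_isWeightedHomogeneous n L).weightedHomogeneousComponent_same]
    have e2 : W n (totalDeriv G) = totalDeriv (W n G) := by
      rw [hGdecomp, map_sum]
      rw [Finset.sum_eq_single_of_mem n hn ?ne2]
      case ne2 =>
        intro m _ hmn
        exact (isWH_totalDeriv
          (weightedHomogeneousComponent_isWeightedHomogeneous m G)).weightedHomogeneousComponent_ne
          n hmn.symm
      exact (isWH_totalDeriv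
        (weightedHomogeneousComponent_isWeightedHomogeneous n G)).weightedHomogeneousComponent_same
    rw [← e1, e2]
  -- Step 4: antiderivatives of each component
  have hfn : ∀ n : ℕ, ∃ f : JetAlgebra,
      totalDeriv f = if n ∈ Finset.range (D+1) then W n L else 0 := by
    intro n
    by_cases hn : n ∈ Finset.range (D+1)
    · rw [if_pos hn]
      match n with
      | 0 =>
        apply exists_antideriv
        intro m hm
        have h0 : Finsupp.weight jw m = 0 :=
          (weightedHomogeneousComponent_isWeightedHomogeneous 0 L) (mem_support_iff.mp hm)
        intro v hv
        rw [Finset.mem_singleton]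
        match v with
        | none => rfl
        | some i =>
          exfalso
          have hle := Finsupp.le_weight_of_ne_zero' (w := jw) (Finsupp.mem_support_iff.mp hv)
          rw [h0] at hle
          simp [jw] at hle
      | (n+1) =>
        refine ⟨((n+1 : ℕ) : ℝ)⁻¹ • W (n+1) G, ?_⟩
        rw [totalDeriv_smul, ← hextract (n+1) hn, ← Nat.cast_smul_eq_nsmul ℝ, smul_smul,
          inv_mul_cancel₀ (by positivity), one_smul]
    · exact ⟨0, by rw [if_neg hn, totalDeriv_zero]⟩
  choose F hF using hfn
  refine ⟨∑ n ∈ Finset.range (D+1), F n, ?_⟩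
  rw [totalDeriv_finset_sum]
  calc ∑ n ∈ Finset.range (D+1), totalDeriv (F n)
      = ∑ n ∈ Finset.range (D+1), W n L := by
        refine Finset.sum_congr rfl fun n hn => ?_
        rw [hF n, if_pos hn]
    _ = L := sum_range_wcomp L D (le_max_left _ _)
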